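/- arXiv:0710.0164 — 4 statements merged into one kernel-verified Lean document; each statement's English description precedes it below -/
import Mathlib

section
/- For x, y ∈ ℂ^{n+1}, the endomorphisms m(x) and m(y) are equal if and only if there exists c ∈ ℂ with |c| = 1 such that x = c · y. -/
open Complex

/-- The standard hermitian form of signature `(n,1)` on `ℂ^{n+1}`. -/
noncomputable def hForm (n : ℕ) (x y : Fin (n+1) → ℂ) : ℂ :=
  (∑ i : Fin n, x i.castSucc * (starRingEnd ℂ) (y i.castSucc))
    - x (Fin.last n) * (starRingEnd ℂ) (y (Fin.last n))

/-- The real part `g = Re h`. -/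
noncomputable def gForm (n : ℕ) (x y : Fin (n+1) → ℂ) : ℝ := (hForm n x y).re

/-- `m(x) = x ∧ Jx`, i.e. `(x ∧ Jx) z = g(x,z)·Jx − g(Jx,z)·x`. -/
noncomputable def mFun (n : ℕ) (x z : Fin (n+1) → ℂ) : Fin (n+1) → ℂ :=
  gForm n x z • (Complex.I • x) - gForm n (Complex.I • x) z • x

/-!
Since `h` is complex linear in its first argument, `g(Jx, z) = -Im h(x, z)`, so
`m(x) z = i · conj (h(x, z)) · x`: every value of `m(x)` is a multiple of `x`. Hence
`m(x) = m(y)` with `x ≠ 0` forces `x = a · y`, testing against a `z` with `h(x, z) ≠ 0`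
(which exists as `h` is nondegenerate). Finally `m(a · y) = |a|² · m(y)` and `m(y) ≠ 0`
give `|a| = 1`.
-/

section MFun

open ComplexConjugate

variable {n : ℕ}

lemma hForm_smul_left (a : ℂ) (x z : Fin (n+1) → ℂ) :
    hForm n (a • x) z = a * hForm n x z := by
  simp [hForm, Finset.mul_sum, mul_sub, mul_assoc]

lemma hForm_single_one_ne_zero {x : Fin (n+1) → ℂ} {i : Fin (n+1)} (hx : x i ≠ 0) :
    hForm n x (Pi.single i 1) ≠ 0 := by
  induction i using Fin.lastCases with
  | last =>
    have : hForm n x (Pi.single (Fin.last n) 1) = -x (Fin.last n) := by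
      simp [hForm, (Fin.castSucc_lt_last _).ne]
    simpa [this] using hx
  | cast k =>
    have : hForm n x (Pi.single k.castSucc 1) = x k.castSucc := by
      simp [hForm, Pi.single_apply, (Fin.castSucc_lt_last _).ne', Fin.castSucc_inj]
    simpa [this] using hx

lemma exists_hForm_ne_zero {x : Fin (n+1) → ℂ} (hx : x ≠ 0) : ∃ z, hForm n x z ≠ 0 := by
  obtain ⟨i, hi⟩ := Function.ne_iff.mp hx
  exact ⟨_, hForm_single_one_ne_zero hi⟩

lemma mFun_apply (x z : Fin (n+1) → ℂ) :
    mFun n x z = (I * conj (hForm n x z)) • x := by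
  ext j
  simp only [mFun, gForm, hForm_smul_left, Pi.sub_apply, Pi.smul_apply, smul_eq_mul,
    real_smul]
  apply ext <;> simp only [mul_re, mul_im, sub_re, sub_im,
    ofReal_re, ofReal_im, I_re, I_im, conj_re,
    conj_im] <;> ring

lemma mFun_smul (a : ℂ) (x : Fin (n+1) → ℂ) :
    mFun n (a • x) = (‖a‖ ^ 2) • mFun n x := by
  ext z j
  simp only [Pi.smul_apply, mFun_apply, hForm_smul_left, smul_eq_mul, real_smul,
    map_mul, ofReal_pow, ← mul_conj']
  ring

lemma mFun_eq_zero_iff {x : Fin (n+1) → ℂ} : mFun n x = 0 ↔ x = 0 := by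
  constructor
  · intro hm
    by_contra hx
    obtain ⟨z, hz⟩ := exists_hForm_ne_zero hx
    have : mFun n x z ≠ 0 := by
      rw [mFun_apply]
      exact smul_ne_zero (mul_ne_zero I_ne_zero ((map_ne_zero _).mpr hz)) hx
    exact this (congrFun hm z)
  · rintro rfl
    ext z : 1
    rw [mFun_apply, smul_zero]
    rfl

lemma exists_eq_smul_of_mFun_eq {x y : Fin (n+1) → ℂ} (h : mFun n x = mFun n y)
    (hx : x ≠ 0) : ∃ a : ℂ, x = a • y := by
  obtain ⟨z, hz⟩ := exists_hForm_ne_zero hx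
  have hxz : I * conj (hForm n x z) ≠ 0 := mul_ne_zero I_ne_zero ((map_ne_zero _).mpr hz)
  have hvalue := congrFun h z
  rw [mFun_apply, mFun_apply] at hvalue
  refine ⟨(I * conj (hForm n x z))⁻¹ * (I * conj (hForm n y z)), ?_⟩
  rw [mul_smul, ← hvalue, inv_smul_smul₀ hxz]

end MFun

theorem mFun_eq_iff_unit_multiple_general (n : ℕ) (x y : Fin (n+1) → ℂ) :
    (∀ z : Fin (n+1) → ℂ, mFun n x z = mFun n y z) ↔
      ∃ c : ℂ, ‖c‖ = 1 ∧ x = c • y := by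
  rw [← funext_iff]
  constructor
  · intro hxy
    rcases eq_or_ne x 0 with rfl | hx
    · have hy : y = 0 := mFun_eq_zero_iff.mp (hxy ▸ mFun_eq_zero_iff.mpr rfl)
      exact ⟨1, norm_one, by rw [hy, smul_zero]⟩
    · obtain ⟨a, rfl⟩ := exists_eq_smul_of_mFun_eq hxy hx
      have hmy : mFun n y ≠ 0 := mFun_eq_zero_iff.not.mpr (by rintro rfl; simp at hx)
      rw [mFun_smul] at hxy
      have ha : ‖a‖ ^ 2 = 1 := smul_left_injective ℝ hmy (hxy.trans (one_smul ℝ _).symm)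
      exact ⟨a, (pow_eq_one_iff_of_nonneg (norm_nonneg a) two_ne_zero).mp ha, rfl⟩
  · rintro ⟨c, hc, rfl⟩
    rw [mFun_smul, hc, one_pow, one_smul]

/-- `m(x) = m(y)` iff `x = c·y` for some complex unit `c`. -/
theorem mFun_eq_iff_unit_multiple (n : ℕ) (hn : 1 ≤ n) (x y : Fin (n+1) → ℂ) :
    (∀ z : Fin (n+1) → ℂ, mFun n x z = mFun n y z) ↔
      ∃ c : ℂ, ‖c‖ = 1 ∧ x = c • y :=
  mFun_eq_iff_unit_multiple_general n x y
end

section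
/- Let A be an h-skew-adjoint ℂ-linear endomorphism of ℂ^{n+1} and let λ ∈ ℂ with Re(λ) ≠ 0. Then there exist no vectors x, y ∈ ℂ^{n+1} with x ≠ 0, Ax = λ·x and Ay = λ·y + x; i.e. every Jordan block of A for an eigenvalue with nonzero real part has size one. -/
/-!
If `A u = λ u + u'` and `A v = λ v + v'`, skew-adjointness gives
`(λ + λ̄) h(u, v) = -(h(u', v) + h(u, v'))`. Along the chain `x, y` (with `x' = 0`, `y' = x`) and
`Re λ ≠ 0` this makes `h` vanish on `span {x, y}`. As `h` is positive definite on the hyperplane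
of vectors with last coordinate `0`, the isotropic vector `y_last • x - x_last • y` is zero, so
either `x` itself is an isotropic vector of that hyperplane, or `y` is a multiple of `x`; in both
cases `x = 0`.
-/

open Complex

/-- An endomorphism of `ℂ^{n+1}` is `h`-skew-adjoint if
`h(Ax,y) + h(x,Ay) = 0` for all `x, y`. -/
def IsHSkewAdjoint (n : ℕ) (A : (Fin (n+1) → ℂ) →ₗ[ℂ] (Fin (n+1) → ℂ)) : Prop :=
  ∀ x y : Fin (n+1) → ℂ, hForm n (A x) y + hForm n x (A y) = 0

namespace LinearMap

variable {K M : Type*} [Field K] [StarRing K] [AddCommGroup M] [Module K M]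
  {B : M →ₗ[K] M →ₗ⋆[K] K} {A : Module.End K M} {lam : K}

theorem IsAdjointPair.apply_eq_zero_of_eq_smul_add (hA : B.IsAdjointPair B A (-A))
    (hlam : lam + star lam ≠ 0) {u u' v v' : M} (hu : A u = lam • u + u')
    (hv : A v = lam • v + v') (hu' : B u' v = 0) (hv' : B u v' = 0) : B u v = 0 := by
  have key : B (A u) v = B u (-A v) := hA u v
  simp only [hu, hv, map_add, map_neg, map_smulₛₗ, add_apply, smul_apply, hu', hv', smul_eq_mul,
    starRingEnd_apply] at key
  have : (lam + star lam) * B u v = 0 := by linear_combination key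
  exact (mul_eq_zero.mp this).resolve_left hlam

theorem IsAdjointPair.jordan_chain_isotropic (hA : B.IsAdjointPair B A (-A))
    (hlam : lam + star lam ≠ 0) {x y : M} (hx : A x = lam • x) (hy : A y = lam • y + x) :
    B x x = 0 ∧ B x y = 0 ∧ B y x = 0 ∧ B y y = 0 := by
  have hx₀ : A x = lam • x + 0 := by rw [hx, add_zero]
  have hxx := hA.apply_eq_zero_of_eq_smul_add hlam hx₀ hx₀ (map_zero₂ B x) (map_zero (B x))
  have hxy := hA.apply_eq_zero_of_eq_smul_add hlam hx₀ hy (map_zero₂ B y) hxx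
  have hyx := hA.apply_eq_zero_of_eq_smul_add hlam hy hx₀ hxx (map_zero (B y))
  exact ⟨hxx, hxy, hyx, hA.apply_eq_zero_of_eq_smul_add hlam hy hy hxy hyx⟩

end LinearMap

theorem Module.End.eq_zero_of_jordan_of_smul_eq_smul {K M : Type*} [Field K] [AddCommGroup M]
    [Module K M] {A : Module.End K M} {lam a b : K} {x y : M} (hx : A x = lam • x)
    (hy : A y = lam • y + x) (hxy : a • x = b • y) (hb : b ≠ 0) : x = 0 := by
  have : b • A y = b • (lam • y) := by
    rw [← map_smul, ← hxy, map_smul, hx, smul_comm, hxy, smul_comm]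
  rw [hy, smul_add, add_eq_left] at this
  exact (smul_eq_zero.mp this).resolve_left hb

theorem LinearMap.apply_smul_sub_smul_self_eq_zero {K M : Type*} [Field K] [StarRing K]
    [AddCommGroup M] [Module K M] (B : M →ₗ[K] M →ₗ⋆[K] K) {x y : M} (a b : K)
    (hxx : B x x = 0) (hxy : B x y = 0) (hyx : B y x = 0) (hyy : B y y = 0) :
    B (a • x - b • y) (a • x - b • y) = 0 := by
  simp [hxx, hxy, hyx, hyy]

noncomputable def hSesqForm (n : ℕ) : (Fin (n+1) → ℂ) →ₗ[ℂ] (Fin (n+1) → ℂ) →ₗ⋆[ℂ] ℂ :=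
  LinearMap.mk₂'ₛₗ _ _ (hForm n)
    (fun _ _ _ => by simp only [hForm, Pi.add_apply, add_mul, Finset.sum_add_distrib]; ring)
    (fun _ _ _ => by
      simp only [hForm, Pi.smul_apply, smul_eq_mul, RingHom.id_apply, mul_sub, Finset.mul_sum,
        mul_assoc])
    (fun _ _ _ => by
      simp only [hForm, Pi.add_apply, map_add, mul_add, Finset.sum_add_distrib]; ring)
    (fun _ _ _ => by
      simp only [hForm, Pi.smul_apply, smul_eq_mul, map_mul, mul_sub, Finset.mul_sum,
        mul_left_comm _ ((starRingEnd ℂ) _)])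

@[simp]
theorem hSesqForm_apply (n : ℕ) (x y : Fin (n+1) → ℂ) : hSesqForm n x y = hForm n x y := rfl

theorem IsHSkewAdjoint.isAdjointPair {n : ℕ} {A : (Fin (n+1) → ℂ) →ₗ[ℂ] (Fin (n+1) → ℂ)}
    (hA : IsHSkewAdjoint n A) : (hSesqForm n).IsAdjointPair (hSesqForm n) A (-A) := fun x y => by
  rw [Pi.neg_apply, map_neg, hSesqForm_apply, hSesqForm_apply]
  exact eq_neg_of_add_eq_zero_left (hA x y)

theorem eq_zero_of_hForm_self_eq_zero {n : ℕ} {z : Fin (n+1) → ℂ} (hzz : hForm n z z = 0)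
    (hz : z (Fin.last n) = 0) : z = 0 := by
  have hsum : ∑ i : Fin n, normSq (z i.castSucc) = 0 := by
    apply ofReal_injective
    simp only [hForm, hz, zero_mul, sub_zero, mul_conj] at hzz
    exact_mod_cast hzz
  funext i
  induction i using Fin.lastCases with
  | last => exact hz
  | cast j =>
    rw [Pi.zero_apply, ← normSq_eq_zero]
    exact (Finset.sum_eq_zero_iff_of_nonneg fun _ _ => normSq_nonneg _).mp hsum j
      (Finset.mem_univ j)

theorem smul_eq_smul_of_hForm_eq_zero {n : ℕ} {x y : Fin (n+1) → ℂ} (hxx : hForm n x x = 0)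
    (hxy : hForm n x y = 0) (hyx : hForm n y x = 0) (hyy : hForm n y y = 0) :
    y (Fin.last n) • x = x (Fin.last n) • y := by
  rw [← sub_eq_zero]
  refine eq_zero_of_hForm_self_eq_zero ?_ ?_
  · exact (hSesqForm n).apply_smul_sub_smul_self_eq_zero _ _ hxx hxy hyx hyy
  · simp only [Pi.sub_apply, Pi.smul_apply, smul_eq_mul]; ring

theorem no_jordan_block_of_re_ne_zero_general (n : ℕ)
    (A : (Fin (n+1) → ℂ) →ₗ[ℂ] (Fin (n+1) → ℂ)) (hA : IsHSkewAdjoint n A)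
    (lam : ℂ) (hre : lam.re ≠ 0) :
    ¬ ∃ x y : Fin (n+1) → ℂ, x ≠ 0 ∧ A x = lam • x ∧ A y = lam • y + x := by
  rintro ⟨x, y, hx0, hx, hy⟩
  have hlam : lam + star lam ≠ 0 := by
    rw [← starRingEnd_apply, add_conj, ofReal_ne_zero]
    exact mul_ne_zero two_ne_zero hre
  obtain ⟨hxx, hxy, hyx, hyy⟩ := hA.isAdjointPair.jordan_chain_isotropic hlam hx hy
  rcases eq_or_ne (x (Fin.last n)) 0 with hlast | hlast
  · exact hx0 (eq_zero_of_hForm_self_eq_zero hxx hlast)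
  · exact hx0 (Module.End.eq_zero_of_jordan_of_smul_eq_smul hx hy
      (smul_eq_smul_of_hForm_eq_zero hxx hxy hyx hyy) hlast)

/-- every Jordan block of an `h`-skew-adjoint endomorphism for
an eigenvalue with nonzero real part has size one: there are no vectors
`x ≠ 0, y` with `Ax = λx` and `Ay = λy + x` when `Re λ ≠ 0`. -/
theorem no_jordan_block_of_re_ne_zero (n : ℕ) (hn : 1 ≤ n)
    (A : (Fin (n+1) → ℂ) →ₗ[ℂ] (Fin (n+1) → ℂ)) (hA : IsHSkewAdjoint n A)
    (lam : ℂ) (hre : lam.re ≠ 0) :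
    ¬ ∃ x y : Fin (n+1) → ℂ, x ≠ 0 ∧ A x = lam • x ∧ A y = lam • y + x :=
  no_jordan_block_of_re_ne_zero_general n A hA lam hre
end

section
/- Suppose there exists x₀ ∈ ℂ^{n} with g(x₀,x₀) = 1 such that R_ρ(x₀, Jx₀) = 0 as an ℝ-linear endomorphism of ℂ^{n}. Then ρ = 0. (This is the algebraic content of the lemma that a Bochner–Kähler metric whose curvature annihilates some pair (X₀, JX₀) with X₀ nonvanishing is flat.) -/
/-!
For any `ℂ`-linear `ρ`, setting `t = g(x₀, Jρx₀)` the curvature along `(x₀, Jx₀)` collapses to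
`R_ρ(x₀,Jx₀)Z = -2g(x₀,x₀)ρZ + 2t·JZ + 2(Jρx₀ ∧ Jx₀)Z + 2(ρx₀ ∧ x₀)Z`.
At `Z = x₀`, skew-symmetry gives `g(ρx₀, x₀) = 0`, and the identity becomes `ρx₀ = t·Jx₀`;
pairing this with `x₀` gives `t = -t`, so `ρx₀ = 0`. Then all wedge terms vanish and the
identity reads `-2ρZ = 0` for every `Z`.
-/

open Complex

/-- The standard positive definite hermitian inner product on `ℂ^n`
(`ℂ`-linear in the first argument). -/
noncomputable def innerC (n : ℕ) (x y : Fin n → ℂ) : ℂ :=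
  ∑ i : Fin n, x i * (starRingEnd ℂ) (y i)

/-- Its real part `g = Re⟪·,·⟫`. -/
noncomputable def gR (n : ℕ) (x y : Fin n → ℂ) : ℝ := (innerC n x y).re

/-- The wedge `(u ∧ v) Z = g(u,Z)·v − g(v,Z)·u`. -/
noncomputable def wedgeR (n : ℕ) (u v Z : Fin n → ℂ) : Fin n → ℂ :=
  gR n u Z • v - gR n v Z • u

/-- The Bochner–Kähler curvature operator
`R_ρ(X,Y)Z = 2g(X,JY)ρZ + 2g(X,ρY)JZ + (ρY∧JX)Z − (ρX∧JY)Z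
+ (X∧JρY)Z − (Y∧JρX)Z`, where `J` is multiplication by `i`. -/
noncomputable def Rcurv (n : ℕ) (ρ : (Fin n → ℂ) →ₗ[ℂ] (Fin n → ℂ))
    (X Y Z : Fin n → ℂ) : Fin n → ℂ :=
  (2 * gR n X (Complex.I • Y)) • ρ Z + (2 * gR n X (ρ Y)) • (Complex.I • Z)
    + wedgeR n (ρ Y) (Complex.I • X) Z - wedgeR n (ρ X) (Complex.I • Y) Z
    + wedgeR n X (Complex.I • ρ Y) Z - wedgeR n Y (Complex.I • ρ X) Z

namespace BochnerKahler

variable {n : ℕ}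

lemma conj_innerC (x y : Fin n → ℂ) : (starRingEnd ℂ) (innerC n y x) = innerC n x y := by
  simp [innerC, map_sum, mul_comm]

lemma innerC_smul_left (c : ℂ) (x y : Fin n → ℂ) : innerC n (c • x) y = c * innerC n x y := by
  simp [innerC, Finset.mul_sum, mul_assoc]

lemma innerC_smul_right (c : ℂ) (x y : Fin n → ℂ) :
    innerC n x (c • y) = (starRingEnd ℂ) c * innerC n x y := by
  simp only [innerC, Finset.mul_sum, Pi.smul_apply, smul_eq_mul, map_mul]
  exact Finset.sum_congr rfl fun i _ => by ring

lemma gR_comm (x y : Fin n → ℂ) : gR n x y = gR n y x := by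
  rw [gR, gR, ← conj_innerC, Complex.conj_re]

lemma gR_smul_left (r : ℝ) (x y : Fin n → ℂ) : gR n (r • x) y = r * gR n x y := by
  rw [gR, gR, ← Complex.coe_smul, innerC_smul_left, Complex.re_ofReal_mul]

lemma gR_smul_right (r : ℝ) (x y : Fin n → ℂ) : gR n x (r • y) = r * gR n x y := by
  rw [gR_comm, gR_smul_left, gR_comm]

lemma gR_neg_left (x y : Fin n → ℂ) : gR n (-x) y = -gR n x y := by
  simpa using gR_smul_left (-1) x y

lemma gR_neg_right (x y : Fin n → ℂ) : gR n x (-y) = -gR n x y := by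
  rw [gR_comm, gR_neg_left, gR_comm]

lemma gR_zero_left (y : Fin n → ℂ) : gR n 0 y = 0 := by
  simpa using gR_smul_left 0 0 y

lemma gR_I_smul_left (x y : Fin n → ℂ) : gR n (I • x) y = -gR n x (I • y) := by
  simp [gR, innerC_smul_left, innerC_smul_right]

lemma gR_I_smul_self (x : Fin n → ℂ) : gR n (I • x) x = 0 := by
  have h := gR_I_smul_left x x
  rw [gR_comm x] at h
  linarith

lemma I_smul_I_smul (v : Fin n → ℂ) : I • I • v = -v := by
  rw [smul_smul, I_mul_I, neg_one_smul]

lemma wedgeR_neg_right (u v Z : Fin n → ℂ) : wedgeR n u (-v) Z = -wedgeR n u v Z := by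
  simp only [wedgeR, gR_neg_left]
  module

lemma wedgeR_swap (u v Z : Fin n → ℂ) : wedgeR n v u Z = -wedgeR n u v Z := by
  simp only [wedgeR]
  module

lemma wedgeR_zero_left (v Z : Fin n → ℂ) : wedgeR n 0 v Z = 0 := by
  simp [wedgeR, gR_zero_left]

lemma gR_apply_self_eq_zero {ρ : (Fin n → ℂ) →ₗ[ℂ] (Fin n → ℂ)}
    (hρ : ∀ x y : Fin n → ℂ, innerC n (ρ x) y + innerC n x (ρ y) = 0) (x : Fin n → ℂ) :
    gR n (ρ x) x = 0 := by
  have h := congrArg Complex.re (hρ x x)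
  rw [Complex.add_re, Complex.zero_re, ← gR, ← gR, gR_comm x] at h
  linarith

lemma Rcurv_I_smul_self (ρ : (Fin n → ℂ) →ₗ[ℂ] (Fin n → ℂ)) (X Z : Fin n → ℂ) :
    Rcurv n ρ X (I • X) Z = -(2 * gR n X X) • ρ Z + (2 * gR n X (I • ρ X)) • (I • Z)
      + (2 : ℝ) • wedgeR n (I • ρ X) (I • X) Z + (2 : ℝ) • wedgeR n (ρ X) X Z := by
  rw [Rcurv, map_smul, I_smul_I_smul, I_smul_I_smul, gR_neg_right, wedgeR_neg_right,
    wedgeR_neg_right, wedgeR_swap X, wedgeR_swap (I • X)]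
  module

lemma eq_zero_of_eq_gR_I_smul_smul_I_smul {x v : Fin n → ℂ} (hx : gR n x x = 1)
    (hv : v = gR n x (I • v) • (I • x)) : v = 0 := by
  have ht : gR n x (I • v) = -gR n x (I • v) := by
    nth_rewrite 1 [hv]
    rw [smul_comm, I_smul_I_smul, gR_smul_right, gR_neg_right, hx, mul_neg_one]
  rw [hv, show gR n x (I • v) = 0 by linarith, zero_smul]

lemma apply_eq_zero_of_Rcurv_I_smul_self_apply_self {ρ : (Fin n → ℂ) →ₗ[ℂ] (Fin n → ℂ)}
    (hρ : ∀ x y : Fin n → ℂ, innerC n (ρ x) y + innerC n x (ρ y) = 0) {x : Fin n → ℂ}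
    (hx : gR n x x = 1) (hR : Rcurv n ρ x (I • x) x = 0) : ρ x = 0 := by
  rw [Rcurv_I_smul_self] at hR
  simp only [wedgeR, hx, gR_I_smul_self, gR_apply_self_eq_zero hρ, gR_comm (I • ρ x) x] at hR
  refine eq_zero_of_eq_gR_I_smul_smul_I_smul hx ?_
  linear_combination (norm := module) (-4⁻¹ : ℝ) • hR

end BochnerKahler

open BochnerKahler

theorem rho_eq_zero_of_curv_vanishes_general (n : ℕ)
    (ρ : (Fin n → ℂ) →ₗ[ℂ] (Fin n → ℂ))
    (hρ : ∀ x y : Fin n → ℂ, innerC n (ρ x) y + innerC n x (ρ y) = 0)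
    (x₀ : Fin n → ℂ) (hx₀ : gR n x₀ x₀ = 1)
    (hR : ∀ Z : Fin n → ℂ, Rcurv n ρ x₀ (Complex.I • x₀) Z = 0) :
    ρ = 0 := by
  have hρx₀ : ρ x₀ = 0 := apply_eq_zero_of_Rcurv_I_smul_self_apply_self hρ hx₀ (hR x₀)
  refine LinearMap.ext fun Z => ?_
  have h := hR Z
  rw [Rcurv_I_smul_self, hρx₀, smul_zero, wedgeR_zero_left, wedgeR_zero_left, hx₀] at h
  simpa [gR_comm x₀ 0, gR_zero_left] using h

/-- if a skew-hermitian `ρ ∈ u(n)` satisfies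
`R_ρ(x₀, Jx₀) = 0` for some unit vector `x₀`, then `ρ = 0` (a Bochner–Kähler
metric whose curvature annihilates some pair `(X₀, JX₀)` is flat). -/
theorem rho_eq_zero_of_curv_vanishes (n : ℕ) (hn : 1 ≤ n)
    (ρ : (Fin n → ℂ) →ₗ[ℂ] (Fin n → ℂ))
    (hρ : ∀ x y : Fin n → ℂ, innerC n (ρ x) y + innerC n x (ρ y) = 0)
    (x₀ : Fin n → ℂ) (hx₀ : gR n x₀ x₀ = 1)
    (hR : ∀ Z : Fin n → ℂ, Rcurv n ρ x₀ (Complex.I • x₀) Z = 0) :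
    ρ = 0 :=
  rho_eq_zero_of_curv_vanishes_general n ρ hρ x₀ hx₀ hR
end

section
/- Suppose x₀ ∈ ℂ^{n} satisfies g(x₀,x₀) = 1 and that ρ satisfies the identity ρ = g(x₀, ρJx₀)·J − (x₀ ∧ ρx₀) − (Jx₀ ∧ ρJx₀) as ℝ-linear endomorphisms of ℂ^{n}. Then ρx₀ = g(x₀, ρJx₀)·Jx₀, and moreover ρx₀ = 0. -/
open Complex

section

variable {n : ℕ}

lemma innerC_comm (x y : Fin n → ℂ) : innerC n y x = starRingEnd ℂ (innerC n x y) := by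
  simp [innerC, map_sum, mul_comm]

lemma gR_comm (x y : Fin n → ℂ) : gR n x y = gR n y x := by
  simp [gR, innerC_comm x y]

lemma gR_I_smul_self (x : Fin n → ℂ) : gR n (I • x) x = 0 := by
  simp only [gR, innerC, Complex.re_sum]
  exact Finset.sum_eq_zero fun i _ => by simp; ring

lemma gR_neg_smul_right (r : ℝ) (x y : Fin n → ℂ) : gR n x (-(r • y)) = -r * gR n x y := by
  simp only [gR, innerC, Pi.neg_apply, Pi.smul_apply, real_smul, map_neg, map_mul, conj_ofReal,
    mul_neg, Finset.sum_neg_distrib, neg_re, re_sum, mul_re, ofReal_re, conj_re, ofReal_im, conj_im,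
    zero_mul, neg_zero, sub_zero, mul_im, add_zero, sub_neg_eq_add, Finset.mul_sum, neg_mul, neg_inj]
  exact Finset.sum_congr rfl fun i _ => by ring

lemma gR_apply_self_eq_zero_of_skew {ρ : (Fin n → ℂ) → Fin n → ℂ}
    (hρ : ∀ x y, innerC n (ρ x) y + innerC n x (ρ y) = 0) (x : Fin n → ℂ) :
    gR n (ρ x) x = 0 := by
  have h := congrArg Complex.re (hρ x x)
  rw [innerC_comm (ρ x) x, Complex.add_re, Complex.conj_re, Complex.zero_re] at h
  rw [gR]
  linarith

/-- Evaluating the identity `ρ = c J − x₀ ∧ ρx₀ − Jx₀ ∧ ρJx₀` at `x₀` gives `2ρx₀ = 2c Jx₀`. -/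
lemma apply_eq_smul_I_smul_of_identity {ρ : (Fin n → ℂ) → Fin n → ℂ} {x₀ : Fin n → ℂ}
    (hx₀ : gR n x₀ x₀ = 1) (hskew : gR n (ρ x₀) x₀ = 0)
    (hid : ρ x₀ = gR n x₀ (ρ (I • x₀)) • (I • x₀)
        - wedgeR n x₀ (ρ x₀) x₀ - wedgeR n (I • x₀) (ρ (I • x₀)) x₀) :
    ρ x₀ = gR n x₀ (ρ (I • x₀)) • (I • x₀) := by
  rw [wedgeR, wedgeR, hx₀, hskew, gR_I_smul_self, gR_comm (ρ (I • x₀))] at hid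
  linear_combination (norm := module) (2⁻¹ : ℝ) • hid

lemma gR_apply_I_smul_of_apply_eq (ρ : (Fin n → ℂ) →ₗ[ℂ] Fin n → ℂ) {x : Fin n → ℂ} {r : ℝ}
    (h : ρ x = r • (I • x)) : gR n x (ρ (I • x)) = -r * gR n x x := by
  have hJ : ρ (I • x) = -(r • x) := by
    rw [ρ.map_smul, h, smul_comm, smul_smul, I_mul_I, neg_one_smul, smul_neg]
  rw [hJ, gR_neg_smul_right]

end

theorem rho_x0_eq_zero_general (n : ℕ)
    (ρ : (Fin n → ℂ) →ₗ[ℂ] (Fin n → ℂ))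
    (hρ : ∀ x y : Fin n → ℂ, innerC n (ρ x) y + innerC n x (ρ y) = 0)
    (x₀ : Fin n → ℂ) (hx₀ : gR n x₀ x₀ = 1)
    (hid : ∀ Z : Fin n → ℂ,
      ρ Z = gR n x₀ (ρ (Complex.I • x₀)) • (Complex.I • Z)
        - wedgeR n x₀ (ρ x₀) Z
        - wedgeR n (Complex.I • x₀) (ρ (Complex.I • x₀)) Z) :
    ρ x₀ = gR n x₀ (ρ (Complex.I • x₀)) • (Complex.I • x₀) ∧ ρ x₀ = 0 := by
  have hx₀J : ρ x₀ = gR n x₀ (ρ (I • x₀)) • (I • x₀) :=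
    apply_eq_smul_I_smul_of_identity hx₀ (gR_apply_self_eq_zero_of_skew hρ x₀) (hid x₀)
  -- Since `ρ` is `ℂ`-linear, `ρJx₀ = Jρx₀ = -c x₀`, so `c = g(x₀, ρJx₀) = -c`.
  have hc : gR n x₀ (ρ (I • x₀)) = 0 := by
    have := gR_apply_I_smul_of_apply_eq ρ hx₀J
    rw [hx₀] at this
    linarith
  exact ⟨hx₀J, by rw [hx₀J, hc, zero_smul]⟩

/-- if a skew-hermitian `ρ ∈ u(n)` satisfies
`ρ = g(x₀,ρJx₀)·J − (x₀ ∧ ρx₀) − (Jx₀ ∧ ρJx₀)` for a unit vector `x₀`, then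
`ρx₀ = g(x₀,ρJx₀)·Jx₀`, and moreover `ρx₀ = 0`. -/
theorem rho_x0_eq_zero (n : ℕ) (hn : 1 ≤ n)
    (ρ : (Fin n → ℂ) →ₗ[ℂ] (Fin n → ℂ))
    (hρ : ∀ x y : Fin n → ℂ, innerC n (ρ x) y + innerC n x (ρ y) = 0)
    (x₀ : Fin n → ℂ) (hx₀ : gR n x₀ x₀ = 1)
    (hid : ∀ Z : Fin n → ℂ,
      ρ Z = gR n x₀ (ρ (Complex.I • x₀)) • (Complex.I • Z)
        - wedgeR n x₀ (ρ x₀) Z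
        - wedgeR n (Complex.I • x₀) (ρ (Complex.I • x₀)) Z) :
    ρ x₀ = gR n x₀ (ρ (Complex.I • x₀)) • (Complex.I • x₀) ∧ ρ x₀ = 0 :=
  rho_x0_eq_zero_general n ρ hρ x₀ hx₀ hid
end
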